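/- arXiv:1101.1077 — 7 statements merged into one kernel-verified Lean document; each statement's English description precedes it below -/
import Mathlib

section
/- Let r : F̄X ⊗ FY ⟶ Ω be tame with witnesses (r_*, r^*) and let s : F̄Y ⊗ FZ ⟶ Ω be tame with witnesses (s_*, s^*). Then the composite s • r is tame with witnesses (s_* ∘ r_*, r^* ∘ s^*); explicitly, cpZ ∘ ((s_* ∘ r_*)‾ ⊗ id_{FZ}) = s • r and cpX ∘ (id_{F̄X} ⊗ (r^* ∘ s^*)) = s • r. -/
open CategoryTheory MonoidalCategory

universe u v

namespace TameRelation

variable {C : Type u} [Category.{v} C] [MonoidalCategory C] (B : C ⥤ C) {Ω FX FY FZ : C}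

/-- The paper's condition on `r_*`; `IsUpperWitness` is the one on `r^*`. -/
def IsLowerWitness (cp : B.obj FY ⊗ FY ⟶ Ω) (r : B.obj FX ⊗ FY ⟶ Ω) (f : FX ⟶ FY) : Prop :=
  (B.map f ⊗ₘ 𝟙 FY) ≫ cp = r

def IsUpperWitness (cp : B.obj FX ⊗ FX ⟶ Ω) (r : B.obj FX ⊗ FY ⟶ Ω) (g : FY ⟶ FX) : Prop :=
  (𝟙 (B.obj FX) ⊗ₘ g) ≫ cp = r

/-- The composite `s • r`; it only depends on the lower witness `f` of `r`. -/
def relComp (f : FX ⟶ FY) (s : B.obj FY ⊗ FZ ⟶ Ω) : B.obj FX ⊗ FZ ⟶ Ω :=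
  (B.map f ⊗ₘ 𝟙 FZ) ≫ s

variable {B}

theorem IsLowerWitness.comp {cpZ : B.obj FZ ⊗ FZ ⟶ Ω} {s : B.obj FY ⊗ FZ ⟶ Ω} {g : FY ⟶ FZ}
    (hs : IsLowerWitness B cpZ s g) (f : FX ⟶ FY) :
    IsLowerWitness B cpZ (relComp B f s) (f ≫ g) := by
  rw [IsLowerWitness, relComp, ← hs, B.map_comp, ← Category.assoc, tensorHom_comp_tensorHom,
    Category.comp_id]

/-- The two witnesses act on different tensor factors, so they commute by the interchange law. -/
theorem IsUpperWitness.comp {cpX : B.obj FX ⊗ FX ⟶ Ω} {cpY : B.obj FY ⊗ FY ⟶ Ω}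
    {r : B.obj FX ⊗ FY ⟶ Ω} {f : FX ⟶ FY} {g : FY ⟶ FX} {s : B.obj FY ⊗ FZ ⟶ Ω} {g' : FZ ⟶ FY}
    (hr : IsUpperWitness B cpX r g) (hf : IsLowerWitness B cpY r f)
    (hs : IsUpperWitness B cpY s g') :
    IsUpperWitness B cpX (relComp B f s) (g' ≫ g) := by
  unfold IsUpperWitness IsLowerWitness relComp at *
  simp only [id_tensorHom, tensorHom_id] at *
  rw [← hs, whiskerLeft_comp, Category.assoc, hr, ← hf, whisker_exchange_assoc]

end TameRelation

/-- Composition of tame relations is tame, with witnesses `r_* ≫ s_*` and `s^* ≫ r^*`. -/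
theorem tame_comp {C : Type u} [Category.{v} C] [MonoidalCategory C]
    (B : C ⥤ C) (Ω FX FY FZ : C)
    (cpX : B.obj FX ⊗ FX ⟶ Ω) (cpY : B.obj FY ⊗ FY ⟶ Ω) (cpZ : B.obj FZ ⊗ FZ ⟶ Ω)
    (r : B.obj FX ⊗ FY ⟶ Ω) (rst : FX ⟶ FY) (rco : FY ⟶ FX)
    (hr1 : (B.map rst ⊗ₘ 𝟙 FY) ≫ cpY = r)
    (hr2 : (𝟙 (B.obj FX) ⊗ₘ rco) ≫ cpX = r)
    (s : B.obj FY ⊗ FZ ⟶ Ω) (sst : FY ⟶ FZ) (sco : FZ ⟶ FY)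
    (hs1 : (B.map sst ⊗ₘ 𝟙 FZ) ≫ cpZ = s)
    (hs2 : (𝟙 (B.obj FY) ⊗ₘ sco) ≫ cpY = s) :
    (B.map (rst ≫ sst) ⊗ₘ 𝟙 FZ) ≫ cpZ = (B.map rst ⊗ₘ 𝟙 FZ) ≫ s ∧
    (𝟙 (B.obj FX) ⊗ₘ (sco ≫ rco)) ≫ cpX = (B.map rst ⊗ₘ 𝟙 FZ) ≫ s :=
  ⟨TameRelation.IsLowerWitness.comp hs1 rst, TameRelation.IsUpperWitness.comp hr2 hr1 hs2⟩
end

section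
/- Let r : F̄X ⊗ FY ⟶ Ω be tame with witnesses (r_*, r^*) and assume the comparison cpX is symmetric. Then the dagger r† equals the composite j ∘ r̄ ∘ τ⁻¹ : F̄Y ⊗ FX ⟶ Ω, where τ = τ_{FX,FY} : (F̄X ⊗ FY)‾ ≅ F̄Y ⊗ FX is the twist. -/
open CategoryTheory MonoidalCategory

universe u v

/-- The twist map `τ : (X̄ ⊗ Y)‾ ≅ Ȳ ⊗ X` in an involutive symmetric monoidal category. -/
noncomputable def twist {C : Type u} [Category.{v} C] [MonoidalCategory C]
    [SymmetricCategory C] (B : C ⥤ C) (ι : 𝟭 C ≅ B ⋙ B)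
    (ξ : ∀ X Y : C, B.obj X ⊗ B.obj Y ≅ B.obj (X ⊗ Y)) (X Y : C) :
    B.obj (B.obj X ⊗ Y) ≅ B.obj Y ⊗ X :=
  (ξ (B.obj X) Y).symm ≪≫ tensorIso (ι.app X).symm (Iso.refl (B.obj Y)) ≪≫ β_ X (B.obj Y)

/-! The twist is natural in its second variable, so `τ ≫ ((r^*)‾ ⊗ id)` is the conjugate of
`id ⊗ r^*` followed by `τ`. Composing with `cpX`, symmetry of `cpX` turns `τ ≫ cpX` into
`j ∘ (cpX)‾`, and tameness identifies `(id ⊗ r^*) ≫ cpX` with `r`. -/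

section Twist

variable {C : Type u} [Category.{v} C] [MonoidalCategory C] (B : C ⥤ C)
  (ξ : ∀ X Y : C, B.obj X ⊗ B.obj Y ≅ B.obj (X ⊗ Y))

theorem map_whiskerLeft_comp_inv {X Y Y' : C} (g : Y ⟶ Y')
    (hξ : B.obj X ◁ B.map g ≫ (ξ X Y').hom = (ξ X Y).hom ≫ B.map (X ◁ g)) :
    B.map (X ◁ g) ≫ (ξ X Y').inv = (ξ X Y).inv ≫ B.obj X ◁ B.map g := by
  rw [Iso.comp_inv_eq, Category.assoc, hξ, Iso.inv_hom_id_assoc]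

theorem twist_hom_naturality_right [SymmetricCategory C] (ι : 𝟭 C ≅ B ⋙ B) (X : C)
    {Y Y' : C} (g : Y ⟶ Y')
    (hξ : B.obj (B.obj X) ◁ B.map g ≫ (ξ (B.obj X) Y').hom =
      (ξ (B.obj X) Y).hom ≫ B.map (B.obj X ◁ g)) :
    B.map (B.obj X ◁ g) ≫ (twist B ι ξ X Y').hom = (twist B ι ξ X Y).hom ≫ B.map g ▷ X := by
  simp only [twist, Iso.trans_hom, Iso.symm_hom, tensorIso_hom, Iso.refl_hom, tensorHom_id,
    Iso.app_inv, Category.assoc]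
  rw [← Category.assoc, map_whiskerLeft_comp_inv B ξ g hξ, Category.assoc,
    whisker_exchange_assoc]
  exact _ ≫= _ ≫= BraidedCategory.braiding_naturality_right _ _

end Twist

theorem dagger_eq_conjugate_general {C : Type u} [Category.{v} C] [MonoidalCategory C]
    [SymmetricCategory C] (B : C ⥤ C)
    (ι : 𝟭 C ≅ B ⋙ B)
    (ξ : ∀ X Y : C, B.obj X ⊗ B.obj Y ≅ B.obj (X ⊗ Y))
    (hξ : ∀ {X X' Y Y' : C} (f : X ⟶ X') (g : Y ⟶ Y'),
      (B.map f ⊗ₘ B.map g) ≫ (ξ X' Y').hom = (ξ X Y).hom ≫ B.map (f ⊗ₘ g))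
    (Ω FX FY : C) (j : B.obj Ω ⟶ Ω)
    (cpX : B.obj FX ⊗ FX ⟶ Ω)
    -- cpX is symmetric
    (hsymX : (twist B ι ξ FX FX).hom ≫ cpX = B.map cpX ≫ j)
    (r : B.obj FX ⊗ FY ⟶ Ω) (rco : FY ⟶ FX)
    (hr2 : (𝟙 (B.obj FX) ⊗ₘ rco) ≫ cpX = r) :
    (B.map rco ⊗ₘ 𝟙 FX) ≫ cpX = (twist B ι ξ FX FY).inv ≫ B.map r ≫ j := by
  have hξ_rco := hξ (𝟙 (B.obj FX)) rco
  rw [B.map_id, id_tensorHom, id_tensorHom] at hξ_rco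
  rw [id_tensorHom] at hr2
  rw [tensorHom_id, Iso.eq_inv_comp]
  calc (twist B ι ξ FX FY).hom ≫ B.map rco ▷ FX ≫ cpX
      = B.map (B.obj FX ◁ rco) ≫ (twist B ι ξ FX FX).hom ≫ cpX := by
        rw [← Category.assoc, ← twist_hom_naturality_right B ξ ι FX rco hξ_rco,
          Category.assoc]
    _ = B.map r ≫ j := by rw [hsymX, ← B.map_comp_assoc, hr2]

/-- For a tame relation `r` with symmetric comparison `cpX`, the dagger
`r† = cpX ∘ ((r^*)‾ ⊗ id)` equals `j ∘ r̄ ∘ τ⁻¹`. -/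
theorem dagger_eq_conjugate {C : Type u} [Category.{v} C] [MonoidalCategory C]
    [SymmetricCategory C] (B : C ⥤ C)
    (ι : 𝟭 C ≅ B ⋙ B) (hι : ∀ X : C, B.map (ι.hom.app X) = ι.hom.app (B.obj X))
    (ζ : 𝟙_ C ≅ B.obj (𝟙_ C))
    (ξ : ∀ X Y : C, B.obj X ⊗ B.obj Y ≅ B.obj (X ⊗ Y))
    (hξ : ∀ {X X' Y Y' : C} (f : X ⟶ X') (g : Y ⟶ Y'),
      (B.map f ⊗ₘ B.map g) ≫ (ξ X' Y').hom = (ξ X Y).hom ≫ B.map (f ⊗ₘ g))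
    (Ω FX FY : C) (j : B.obj Ω ⟶ Ω)
    (cpX : B.obj FX ⊗ FX ⟶ Ω) (cpY : B.obj FY ⊗ FY ⟶ Ω)
    -- cpX is symmetric
    (hsymX : (twist B ι ξ FX FX).hom ≫ cpX = B.map cpX ≫ j)
    (r : B.obj FX ⊗ FY ⟶ Ω) (rst : FX ⟶ FY) (rco : FY ⟶ FX)
    (hr1 : (B.map rst ⊗ₘ 𝟙 FY) ≫ cpY = r)
    (hr2 : (𝟙 (B.obj FX) ⊗ₘ rco) ≫ cpX = r) :
    (B.map rco ⊗ₘ 𝟙 FX) ≫ cpX = (twist B ι ξ FX FY).inv ≫ B.map r ≫ j :=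
  dagger_eq_conjugate_general B ι ξ hξ Ω FX FY j cpX hsymX r rco hr2
end

section
/- Let r : F̄X ⊗ FY ⟶ Ω be tame with witnesses (r_*, r^*) and assume both comparisons cpX and cpY are symmetric. Then the dagger r† : F̄Y ⊗ FX ⟶ Ω is itself tame, with witnesses (r†)_* = r^* and (r†)^* = r_*; explicitly, cpX ∘ ((r^*)‾ ⊗ id_{FX}) = r† and cpY ∘ (id_{F̄Y} ⊗ r_*) = r†. -/
/-!
Symmetry of a comparison lets it absorb a twist: precomposing `(ḡ ⊗ f) ≫ cp` with the twist gives
`j ∘ ((f̄ ⊗ g) ≫ cp)‾`. Applied to `(id ⊗ r_*) ≫ cpY` and to `((r^*)‾ ⊗ id) ≫ cpX`, both become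
`j ∘ r̄` by the two tameness equations, and the twist is an isomorphism, so they agree.
-/

open CategoryTheory MonoidalCategory

universe u v

section Twist

variable {C : Type u} [Category.{v} C] [MonoidalCategory C] [SymmetricCategory C]
  (B : C ⥤ C) (ι : 𝟭 C ≅ B ⋙ B) (ξ : ∀ X Y : C, B.obj X ⊗ B.obj Y ≅ B.obj (X ⊗ Y))

lemma twist_natural
    (hξ : ∀ {X X' Y Y' : C} (f : X ⟶ X') (g : Y ⟶ Y'),
      (B.map f ⊗ₘ B.map g) ≫ (ξ X' Y').hom = (ξ X Y).hom ≫ B.map (f ⊗ₘ g))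
    {X X' Y Y' : C} (f : X ⟶ X') (g : Y ⟶ Y') :
    B.map (B.map f ⊗ₘ g) ≫ (twist B ι ξ X' Y').hom =
      (twist B ι ξ X Y).hom ≫ (B.map g ⊗ₘ f) := by
  have hB : B.map (B.map f ⊗ₘ g) =
      (ξ (B.obj X) Y).inv ≫ (B.map (B.map f) ⊗ₘ B.map g) ≫ (ξ (B.obj X') Y').hom := by
    rw [hξ (B.map f) g, Iso.inv_hom_id_assoc]
  have hι : B.map (B.map f) ≫ ι.inv.app X' = ι.inv.app X ≫ f := by
    simpa using ι.inv.naturality f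
  have hβ : (B.map (B.map f) ⊗ₘ B.map g) ≫ (ι.inv.app X' ⊗ₘ 𝟙 (B.obj Y')) ≫
        (β_ X' (B.obj Y')).hom
      = (ι.inv.app X ⊗ₘ 𝟙 (B.obj Y)) ≫ (β_ X (B.obj Y)).hom ≫ (B.map g ⊗ₘ f) := by
    rw [tensorHom_comp_tensorHom_assoc, hι, Category.comp_id]
    simp [MonoidalCategory.tensorHom_def, whisker_exchange]
  simp only [twist, Iso.trans_hom, tensorIso_hom, Iso.symm_hom, Iso.refl_hom, Iso.app_inv,
    Category.assoc, hB, Iso.hom_inv_id_assoc, hβ]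

def IsSymmetricComparison {Ω F : C} (j : B.obj Ω ⟶ Ω) (cp : B.obj F ⊗ F ⟶ Ω) : Prop :=
  (twist B ι ξ F F).hom ≫ cp = B.map cp ≫ j

variable {B ι ξ}

lemma IsSymmetricComparison.twist_comp
    (hξ : ∀ {X X' Y Y' : C} (f : X ⟶ X') (g : Y ⟶ Y'),
      (B.map f ⊗ₘ B.map g) ≫ (ξ X' Y').hom = (ξ X Y).hom ≫ B.map (f ⊗ₘ g))
    {Ω F X Y : C} {j : B.obj Ω ⟶ Ω} {cp : B.obj F ⊗ F ⟶ Ω}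
    (hcp : IsSymmetricComparison B ι ξ j cp) (f : X ⟶ F) (g : Y ⟶ F) :
    (twist B ι ξ X Y).hom ≫ (B.map g ⊗ₘ f) ≫ cp = B.map ((B.map f ⊗ₘ g) ≫ cp) ≫ j := by
  rw [← Category.assoc, ← twist_natural B ι ξ hξ, Category.assoc, hcp, B.map_comp,
    Category.assoc]

end Twist

theorem dagger_tame_general {C : Type u} [Category.{v} C] [MonoidalCategory C]
    [SymmetricCategory C] (B : C ⥤ C)
    (ι : 𝟭 C ≅ B ⋙ B)
    (ξ : ∀ X Y : C, B.obj X ⊗ B.obj Y ≅ B.obj (X ⊗ Y))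
    (hξ : ∀ {X X' Y Y' : C} (f : X ⟶ X') (g : Y ⟶ Y'),
      (B.map f ⊗ₘ B.map g) ≫ (ξ X' Y').hom = (ξ X Y).hom ≫ B.map (f ⊗ₘ g))
    (Ω FX FY : C) (j : B.obj Ω ⟶ Ω)
    (cpX : B.obj FX ⊗ FX ⟶ Ω) (cpY : B.obj FY ⊗ FY ⟶ Ω)
    -- cpX is symmetric
    (hsymX : (twist B ι ξ FX FX).hom ≫ cpX = B.map cpX ≫ j)
    -- cpY is symmetric
    (hsymY : (twist B ι ξ FY FY).hom ≫ cpY = B.map cpY ≫ j)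
    (r : B.obj FX ⊗ FY ⟶ Ω) (rst : FX ⟶ FY) (rco : FY ⟶ FX)
    (hr1 : (B.map rst ⊗ₘ 𝟙 FY) ≫ cpY = r)
    (hr2 : (𝟙 (B.obj FX) ⊗ₘ rco) ≫ cpX = r) :
    (B.map rco ⊗ₘ 𝟙 FX) ≫ cpX = (B.map rco ⊗ₘ 𝟙 FX) ≫ cpX ∧
    (𝟙 (B.obj FY) ⊗ₘ rst) ≫ cpY = (B.map rco ⊗ₘ 𝟙 FX) ≫ cpX := by
  refine ⟨rfl, (cancel_epi (twist B ι ξ FX FY).hom).mp ?_⟩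
  calc (twist B ι ξ FX FY).hom ≫ (𝟙 (B.obj FY) ⊗ₘ rst) ≫ cpY
      = B.map ((B.map rst ⊗ₘ 𝟙 FY) ≫ cpY) ≫ j := by
        simpa only [B.map_id] using IsSymmetricComparison.twist_comp hξ hsymY rst (𝟙 FY)
    _ = B.map ((𝟙 (B.obj FX) ⊗ₘ rco) ≫ cpX) ≫ j := by rw [hr1, hr2]
    _ = (twist B ι ξ FX FY).hom ≫ (B.map rco ⊗ₘ 𝟙 FX) ≫ cpX := by
        simpa only [B.map_id] using (IsSymmetricComparison.twist_comp hξ hsymX (𝟙 FX) rco).symm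

/-- For a tame relation `r` with symmetric comparisons, the dagger
`r† = cpX ∘ ((r^*)‾ ⊗ id)` is itself tame, with witnesses `(r†)_* = r^*`, `(r†)^* = r_*`. -/
theorem dagger_tame {C : Type u} [Category.{v} C] [MonoidalCategory C]
    [SymmetricCategory C] (B : C ⥤ C)
    (ι : 𝟭 C ≅ B ⋙ B) (hι : ∀ X : C, B.map (ι.hom.app X) = ι.hom.app (B.obj X))
    (ζ : 𝟙_ C ≅ B.obj (𝟙_ C))
    (ξ : ∀ X Y : C, B.obj X ⊗ B.obj Y ≅ B.obj (X ⊗ Y))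
    (hξ : ∀ {X X' Y Y' : C} (f : X ⟶ X') (g : Y ⟶ Y'),
      (B.map f ⊗ₘ B.map g) ≫ (ξ X' Y').hom = (ξ X Y).hom ≫ B.map (f ⊗ₘ g))
    (Ω FX FY : C) (j : B.obj Ω ⟶ Ω)
    (cpX : B.obj FX ⊗ FX ⟶ Ω) (cpY : B.obj FY ⊗ FY ⟶ Ω)
    -- cpX is symmetric
    (hsymX : (twist B ι ξ FX FX).hom ≫ cpX = B.map cpX ≫ j)
    -- cpY is symmetric
    (hsymY : (twist B ι ξ FY FY).hom ≫ cpY = B.map cpY ≫ j)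
    (r : B.obj FX ⊗ FY ⟶ Ω) (rst : FX ⟶ FY) (rco : FY ⟶ FX)
    (hr1 : (B.map rst ⊗ₘ 𝟙 FY) ≫ cpY = r)
    (hr2 : (𝟙 (B.obj FX) ⊗ₘ rco) ≫ cpX = r) :
    (B.map rco ⊗ₘ 𝟙 FX) ≫ cpX = (B.map rco ⊗ₘ 𝟙 FX) ≫ cpX ∧
    (𝟙 (B.obj FY) ⊗ₘ rst) ≫ cpY = (B.map rco ⊗ₘ 𝟙 FX) ≫ cpX :=
  dagger_tame_general B ι ξ hξ Ω FX FY j cpX cpY hsymX hsymY r rst rco hr1 hr2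
end

section
/- Let r : F̄X ⊗ FY ⟶ Ω be tame with witnesses (r_*, r^*). Then: (1) r is a dagger mono, i.e. r† ∘ (r̄_* ⊗ id_{FX}) = cpX (that is, r† • r = cpX, the identity on X), if and only if r^* ∘ r_* = id_{FX}; (2) r is a dagger epi, i.e. r ∘ ((r^*)‾ ⊗ id_{FY}) = cpY (that is, r • r† = cpY), if and only if r_* ∘ r^* = id_{FY}. Consequently r is a dagger isomorphism (both hold) if and only if r_* is an isomorphism with inverse r^*. -/
open CategoryTheory MonoidalCategory

universe u v

/-! The composites `r† • r = (B r_* ⊗ 1) ≫ (B r^* ⊗ 1) ≫ cpX` and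
`r • r† = (B r^* ⊗ 1) ≫ (B r_* ⊗ 1) ≫ cpY` collapse, by functoriality of `B`, to
`(B f ⊗ 1) ≫ cp` with `f = r_* ≫ r^*` resp. `f = r^* ≫ r_*`. Since `cp` is cancellable in its
first factor and `B` is faithful, `(B f ⊗ 1) ≫ cp = cp` holds exactly when `f = 𝟙`. -/

namespace CategoryTheory

variable {C : Type u} [Category.{v} C] [MonoidalCategory C] (B : C ⥤ C) {Ω F : C}

lemma map_tensorHom_id_comp_eq_self_iff [B.Faithful] (cp : B.obj F ⊗ F ⟶ Ω)
    (hcp : ∀ {W : C} (u v : W ⟶ B.obj F), (u ⊗ₘ 𝟙 F) ≫ cp = (v ⊗ₘ 𝟙 F) ≫ cp → u = v)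
    (f : F ⟶ F) : (B.map f ⊗ₘ 𝟙 F) ≫ cp = cp ↔ f = 𝟙 F := by
  constructor
  · intro h
    apply B.map_injective
    apply hcp
    rw [h, B.map_id, id_tensorHom_id, Category.id_comp]
  · rintro rfl
    rw [B.map_id, id_tensorHom_id, Category.id_comp]

lemma map_tensorHom_id_comp_map_tensorHom_id {X Y Z : C} (f : X ⟶ Y) (g : Y ⟶ Z) (W : C) :
    (B.map f ⊗ₘ 𝟙 W) ≫ (B.map g ⊗ₘ 𝟙 W) = B.map (f ≫ g) ⊗ₘ 𝟙 W := by
  rw [tensorHom_comp_tensorHom, Category.comp_id, B.map_comp]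

end CategoryTheory

theorem tame_dagger_mono_epi_iso_general {C : Type u} [Category.{v} C] [MonoidalCategory C]
    (B : C ⥤ C) [B.Faithful] (Ω FX FY : C)
    (cpX : B.obj FX ⊗ FX ⟶ Ω) (cpY : B.obj FY ⊗ FY ⟶ Ω)
    (monoX1 : ∀ {W : C} (u v : W ⟶ B.obj FX),
      (u ⊗ₘ 𝟙 FX) ≫ cpX = (v ⊗ₘ 𝟙 FX) ≫ cpX → u = v)
    (monoY1 : ∀ {W : C} (u v : W ⟶ B.obj FY),
      (u ⊗ₘ 𝟙 FY) ≫ cpY = (v ⊗ₘ 𝟙 FY) ≫ cpY → u = v)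
    (r : B.obj FX ⊗ FY ⟶ Ω) (rst : FX ⟶ FY) (rco : FY ⟶ FX)
    (hr1 : (B.map rst ⊗ₘ 𝟙 FY) ≫ cpY = r) :
    -- (1) dagger mono: r† • r = id_X  iff  r^* ∘ r_* = id
    ((B.map rst ⊗ₘ 𝟙 FX) ≫ ((B.map rco ⊗ₘ 𝟙 FX) ≫ cpX) = cpX ↔ rst ≫ rco = 𝟙 FX) ∧
    -- (2) dagger epi: r • r† = id_Y  iff  r_* ∘ r^* = id
    ((B.map rco ⊗ₘ 𝟙 FY) ≫ r = cpY ↔ rco ≫ rst = 𝟙 FY) ∧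
    -- consequently: dagger iso iff r_* is an isomorphism with inverse r^*
    (((B.map rst ⊗ₘ 𝟙 FX) ≫ ((B.map rco ⊗ₘ 𝟙 FX) ≫ cpX) = cpX ∧
        (B.map rco ⊗ₘ 𝟙 FY) ≫ r = cpY) ↔
      (rst ≫ rco = 𝟙 FX ∧ rco ≫ rst = 𝟙 FY)) := by
  have mono : (B.map rst ⊗ₘ 𝟙 FX) ≫ ((B.map rco ⊗ₘ 𝟙 FX) ≫ cpX) = cpX ↔ rst ≫ rco = 𝟙 FX := by
    rw [← Category.assoc, map_tensorHom_id_comp_map_tensorHom_id,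
      map_tensorHom_id_comp_eq_self_iff B cpX monoX1]
  have epi : (B.map rco ⊗ₘ 𝟙 FY) ≫ r = cpY ↔ rco ≫ rst = 𝟙 FY := by
    rw [← hr1, ← Category.assoc, map_tensorHom_id_comp_map_tensorHom_id,
      map_tensorHom_id_comp_eq_self_iff B cpY monoY1]
  exact ⟨mono, epi, and_congr mono epi⟩

/-- Characterisation of dagger monos, dagger epis and dagger isomorphisms among tame
relations: `r† • r = id_X` iff `r^* ∘ r_* = id`, `r • r† = id_Y` iff `r_* ∘ r^* = id`,
and `r` is a dagger iso iff `r_*` is an isomorphism with inverse `r^*`. -/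
theorem tame_dagger_mono_epi_iso {C : Type u} [Category.{v} C] [MonoidalCategory C]
    (B : C ⥤ C) [B.Faithful] (Ω FX FY : C)
    (cpX : B.obj FX ⊗ FX ⟶ Ω) (cpY : B.obj FY ⊗ FY ⟶ Ω)
    (monoX1 : ∀ {W : C} (u v : W ⟶ B.obj FX),
      (u ⊗ₘ 𝟙 FX) ≫ cpX = (v ⊗ₘ 𝟙 FX) ≫ cpX → u = v)
    (monoX2 : ∀ {W : C} (u v : W ⟶ FX),
      (𝟙 (B.obj FX) ⊗ₘ u) ≫ cpX = (𝟙 (B.obj FX) ⊗ₘ v) ≫ cpX → u = v)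
    (monoY1 : ∀ {W : C} (u v : W ⟶ B.obj FY),
      (u ⊗ₘ 𝟙 FY) ≫ cpY = (v ⊗ₘ 𝟙 FY) ≫ cpY → u = v)
    (monoY2 : ∀ {W : C} (u v : W ⟶ FY),
      (𝟙 (B.obj FY) ⊗ₘ u) ≫ cpY = (𝟙 (B.obj FY) ⊗ₘ v) ≫ cpY → u = v)
    (r : B.obj FX ⊗ FY ⟶ Ω) (rst : FX ⟶ FY) (rco : FY ⟶ FX)
    (hr1 : (B.map rst ⊗ₘ 𝟙 FY) ≫ cpY = r)
    (hr2 : (𝟙 (B.obj FX) ⊗ₘ rco) ≫ cpX = r) :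
    -- (1) dagger mono: r† • r = id_X  iff  r^* ∘ r_* = id
    ((B.map rst ⊗ₘ 𝟙 FX) ≫ ((B.map rco ⊗ₘ 𝟙 FX) ≫ cpX) = cpX ↔ rst ≫ rco = 𝟙 FX) ∧
    -- (2) dagger epi: r • r† = id_Y  iff  r_* ∘ r^* = id
    ((B.map rco ⊗ₘ 𝟙 FY) ≫ r = cpY ↔ rco ≫ rst = 𝟙 FY) ∧
    -- consequently: dagger iso iff r_* is an isomorphism with inverse r^*
    (((B.map rst ⊗ₘ 𝟙 FX) ≫ ((B.map rco ⊗ₘ 𝟙 FX) ≫ cpX) = cpX ∧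
        (B.map rco ⊗ₘ 𝟙 FY) ≫ r = cpY) ↔
      (rst ≫ rco = 𝟙 FX ∧ rco ≫ rst = 𝟙 FY)) :=
  tame_dagger_mono_epi_iso_general B Ω FX FY cpX cpY monoX1 monoY1 r rst rco hr1
end

section
/- Assume the comparison cpX is symmetric, that j is an isomorphism, and that cpX is cancellable in its second argument: for all morphisms u, v : W ⟶ FX, cpX ∘ (id_{F̄X} ⊗ u) = cpX ∘ (id_{F̄X} ⊗ v) implies u = v. Then cpX is also cancellable in its first argument: for all morphisms u, v : W ⟶ F̄X, cpX ∘ (u ⊗ id_{FX}) = cpX ∘ (v ⊗ id_{FX}) implies u = v. (In the symmetric case the two mono requirements for a comparison relation reduce to a single one.) -/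
/-!
Applying the involution to `(u ⊗ 𝟙) ≫ cp` and using the symmetry `τ ≫ cp = cp̄ ≫ j` moves `u`
into the second argument of `cp`, as `ū ≫ ι⁻¹`, up to the isomorphisms `ξ⁻¹` and `β`.
Cancellability in the second argument then gives `ū = v̄`, and `B` is faithful because
`B ⋙ B ≅ 𝟭`.
-/

open CategoryTheory MonoidalCategory

universe u v

section

variable {C : Type u} [Category.{v} C] [MonoidalCategory C] [SymmetricCategory C]
  {B : C ⥤ C} (ι : 𝟭 C ≅ B ⋙ B) {ξ : ∀ X Y : C, B.obj X ⊗ B.obj Y ≅ B.obj (X ⊗ Y)}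

theorem map_whiskerRight_comp_twist_hom
    (hξ : ∀ {X X' Y Y' : C} (f : X ⟶ X') (g : Y ⟶ Y'),
      (B.map f ⊗ₘ B.map g) ≫ (ξ X' Y').hom = (ξ X Y).hom ≫ B.map (f ⊗ₘ g))
    {W X : C} (w : W ⟶ B.obj X) (Y : C) :
    B.map (w ▷ Y) ≫ (twist B ι ξ X Y).hom =
      (ξ W Y).inv ≫ (β_ (B.obj W) (B.obj Y)).hom ≫ B.obj Y ◁ (B.map w ≫ ι.inv.app X) := by
  have hmap : B.map (w ▷ Y) = (ξ W Y).inv ≫ (B.map w ▷ B.obj Y) ≫ (ξ (B.obj X) Y).hom := by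
    have hw := hξ w (𝟙 Y)
    rw [B.map_id, tensorHom_id, tensorHom_id] at hw
    rw [hw, Iso.inv_hom_id_assoc]
  rw [hmap, twist]
  simp only [Iso.trans_hom, Iso.symm_hom, tensorIso_hom, Iso.refl_hom, tensorHom_id,
    Category.assoc, Iso.hom_inv_id_assoc]
  rw [← comp_whiskerRight_assoc]
  exact congrArg _ (BraidedCategory.braiding_naturality_left (B.map w ≫ ι.inv.app X) _)

theorem map_tensorHom_id_comp_eq_of_symmetric
    (hξ : ∀ {X X' Y Y' : C} (f : X ⟶ X') (g : Y ⟶ Y'),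
      (B.map f ⊗ₘ B.map g) ≫ (ξ X' Y').hom = (ξ X Y).hom ≫ B.map (f ⊗ₘ g))
    {Ω X : C} {j : B.obj Ω ⟶ Ω} {cp : B.obj X ⊗ X ⟶ Ω}
    (hsym : (twist B ι ξ X X).hom ≫ cp = B.map cp ≫ j) {W : C} (w : W ⟶ B.obj X) :
    B.map ((w ⊗ₘ 𝟙 X) ≫ cp) ≫ j =
      (ξ W X).inv ≫ (β_ (B.obj W) (B.obj X)).hom ≫
        (𝟙 (B.obj X) ⊗ₘ (B.map w ≫ ι.inv.app X)) ≫ cp := by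
  rw [B.map_comp, Category.assoc, ← hsym, tensorHom_id, ← Category.assoc,
    map_whiskerRight_comp_twist_hom ι hξ, id_tensorHom]
  simp only [Category.assoc]

end

theorem symmetric_comparison_mono_general {C : Type u} [Category.{v} C] [MonoidalCategory C]
    [SymmetricCategory C] (B : C ⥤ C)
    (ι : 𝟭 C ≅ B ⋙ B)
    (ξ : ∀ X Y : C, B.obj X ⊗ B.obj Y ≅ B.obj (X ⊗ Y))
    (hξ : ∀ {X X' Y Y' : C} (f : X ⟶ X') (g : Y ⟶ Y'),
      (B.map f ⊗ₘ B.map g) ≫ (ξ X' Y').hom = (ξ X Y).hom ≫ B.map (f ⊗ₘ g))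
    (Ω FX : C) (j : B.obj Ω ⟶ Ω)
    (cpX : B.obj FX ⊗ FX ⟶ Ω)
    -- cpX is symmetric
    (hsymX : (twist B ι ξ FX FX).hom ≫ cpX = B.map cpX ≫ j)
    -- cpX is cancellable in its second argument
    (monoX2 : ∀ {W : C} (u v : W ⟶ FX),
      (𝟙 (B.obj FX) ⊗ₘ u) ≫ cpX = (𝟙 (B.obj FX) ⊗ₘ v) ≫ cpX → u = v) :
    -- then cpX is cancellable in its first argument
    ∀ {W : C} (u v : W ⟶ B.obj FX),
      (u ⊗ₘ 𝟙 FX) ≫ cpX = (v ⊗ₘ 𝟙 FX) ≫ cpX → u = v := by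
  intro W u v h
  have hsecond : B.map u ≫ ι.inv.app FX = B.map v ≫ ι.inv.app FX := by
    apply monoX2
    have hB := map_tensorHom_id_comp_eq_of_symmetric ι hξ hsymX u
    rwa [h, map_tensorHom_id_comp_eq_of_symmetric ι hξ hsymX v, Iso.cancel_iso_inv_left,
      Iso.cancel_iso_hom_left, eq_comm] at hB
  have : B.Faithful := .of_comp_iso ι.symm
  exact B.map_injective ((cancel_mono _).mp hsecond)

/-- For a symmetric comparison relation, cancellability in the second argument implies
cancellability in the first argument. -/
theorem symmetric_comparison_mono {C : Type u} [Category.{v} C] [MonoidalCategory C]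
    [SymmetricCategory C] (B : C ⥤ C)
    (ι : 𝟭 C ≅ B ⋙ B) (hι : ∀ X : C, B.map (ι.hom.app X) = ι.hom.app (B.obj X))
    (ζ : 𝟙_ C ≅ B.obj (𝟙_ C))
    (ξ : ∀ X Y : C, B.obj X ⊗ B.obj Y ≅ B.obj (X ⊗ Y))
    (hξ : ∀ {X X' Y Y' : C} (f : X ⟶ X') (g : Y ⟶ Y'),
      (B.map f ⊗ₘ B.map g) ≫ (ξ X' Y').hom = (ξ X Y).hom ≫ B.map (f ⊗ₘ g))
    (Ω FX : C) (j : B.obj Ω ⟶ Ω) [IsIso j]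
    (cpX : B.obj FX ⊗ FX ⟶ Ω)
    -- cpX is symmetric
    (hsymX : (twist B ι ξ FX FX).hom ≫ cpX = B.map cpX ≫ j)
    -- cpX is cancellable in its second argument
    (monoX2 : ∀ {W : C} (u v : W ⟶ FX),
      (𝟙 (B.obj FX) ⊗ₘ u) ≫ cpX = (𝟙 (B.obj FX) ⊗ₘ v) ≫ cpX → u = v) :
    -- then cpX is cancellable in its first argument
    ∀ {W : C} (u v : W ⟶ B.obj FX),
      (u ⊗ₘ 𝟙 FX) ≫ cpX = (v ⊗ₘ 𝟙 FX) ≫ cpX → u = v :=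
  symmetric_comparison_mono_general B ι ξ hξ Ω FX j cpX hsymX monoX2
end

section
/- The following are equivalent: (i) for every y ∈ Y the set {x | r x y} is finite; (ii) there exists a map g : Finset Y → Finset X preserving finite joins (g ∅ = ∅ and g (V ∪ V′) = g V ∪ g V′ for all V, V′ : Finset Y) such that for every U : Finset X and V : Finset Y, the intersection U ∩ g V is nonempty if and only if there exist x ∈ U and y ∈ V with r x y. (This is the identification of tame relations for the finite-powerset comparison in join semilattices with bifinite relations.) -/
/-- Tame relations for the finite-powerset comparison in join semilattices are the bifinite
relations: the factorisation `r^* : Pfin(Y) → Pfin(X)` (a map preserving finite joins and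
satisfying the comparison equation) exists iff for each `y` the set `{x | r x y}` is finite. -/
theorem tame_powerset_iff_finite {X Y : Type*} [DecidableEq X] [DecidableEq Y]
    (r : X → Y → Prop) :
    (∀ y : Y, {x | r x y}.Finite) ↔
    ∃ g : Finset Y → Finset X,
      g ∅ = ∅ ∧
      (∀ V V' : Finset Y, g (V ∪ V') = g V ∪ g V') ∧
      (∀ (U : Finset X) (V : Finset Y),
        (U ∩ g V).Nonempty ↔ ∃ x ∈ U, ∃ y ∈ V, r x y) := by
  constructor
  · intro h
    refine ⟨fun V => V.biUnion (fun y => (h y).toFinset), by simp, ?_, ?_⟩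
    · intro V V'
      ext x
      simp only [Finset.mem_biUnion, Finset.mem_union, Set.Finite.mem_toFinset, Set.mem_setOf_eq]
      constructor
      · rintro ⟨y, hy | hy, hr⟩
        · exact Or.inl ⟨y, hy, hr⟩
        · exact Or.inr ⟨y, hy, hr⟩
      · rintro (⟨y, hy, hr⟩ | ⟨y, hy, hr⟩)
        · exact ⟨y, Or.inl hy, hr⟩
        · exact ⟨y, Or.inr hy, hr⟩
    · intro U V
      constructor
      · rintro ⟨x, hx⟩
        simp only [Finset.mem_inter, Finset.mem_biUnion, Set.Finite.mem_toFinset,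
          Set.mem_setOf_eq] at hx
        exact ⟨x, hx.1, hx.2⟩
      · rintro ⟨x, hxU, y, hyV, hxy⟩
        exact ⟨x, Finset.mem_inter.2 ⟨hxU, Finset.mem_biUnion.2
          ⟨y, hyV, (h y).mem_toFinset.2 hxy⟩⟩⟩
  · rintro ⟨g, -, -, hg⟩ y
    apply Set.Finite.subset (g {y}).finite_toSet
    intro x hx
    have := (hg {x} {y}).2 ⟨x, Finset.mem_singleton_self x, y, Finset.mem_singleton_self y, hx⟩
    obtain ⟨z, hz⟩ := this
    simp only [Finset.mem_inter, Finset.mem_singleton] at hz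
    exact hz.1 ▸ hz.2
end

section
/- The quantum-walk multirelation q is unitary: for all u, v ∈ ℤ ⊕ ℤ, ∑ᶠ w, q u w * conj (q v w) = (if u = v then 1 else 0), and ∑ᶠ w, conj (q w u) * q w v = (if u = v then 1 else 0). -/
open ComplexConjugate

/-- The quantum-walk multirelation on `ℤ + ℤ`, steered by Hadamard's matrix. -/
noncomputable def quantumWalk : (ℤ ⊕ ℤ) → (ℤ ⊕ ℤ) → ℂ
  | Sum.inl n, Sum.inl m => if m = n - 1 then ((1 / Real.sqrt 2 : ℝ) : ℂ) else 0
  | Sum.inl n, Sum.inr m => if m = n + 1 then ((1 / Real.sqrt 2 : ℝ) : ℂ) else 0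
  | Sum.inr n, Sum.inl m => if m = n - 1 then ((1 / Real.sqrt 2 : ℝ) : ℂ) else 0
  | Sum.inr n, Sum.inr m => if m = n + 1 then -((1 / Real.sqrt 2 : ℝ) : ℂ) else 0

lemma finsum_pair (f : ℤ ⊕ ℤ → ℂ) (a b : ℤ)
    (h : ∀ w, f w ≠ 0 → w = Sum.inl a ∨ w = Sum.inr b) :
    ∑ᶠ w, f w = f (Sum.inl a) + f (Sum.inr b) := by
  have : ∑ᶠ w, f w = ∑ w ∈ ({Sum.inl a, Sum.inr b} : Finset (ℤ ⊕ ℤ)), f w := by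
    apply finsum_eq_finset_sum_of_support_subset
    intro w hw
    simpa using h w hw
  rw [this, Finset.sum_insert (by simp), Finset.sum_singleton]

lemma csq' : ((Real.sqrt 2 : ℝ) : ℂ)⁻¹ * ((Real.sqrt 2 : ℝ) : ℂ)⁻¹ = 1 / 2 := by
  rw [← mul_inv, ← Complex.ofReal_mul, Real.mul_self_sqrt (by norm_num : (0:ℝ) ≤ 2)]
  norm_num

lemma csq : ((1 / Real.sqrt 2 : ℝ) : ℂ) * ((1 / Real.sqrt 2 : ℝ) : ℂ) = 1 / 2 := by
  rw [← Complex.ofReal_mul, div_mul_div_comm, one_mul,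
    Real.mul_self_sqrt (by norm_num : (0:ℝ) ≤ 2)]
  norm_num

/-- The quantum-walk multirelation is unitary. -/
theorem quantumWalk_unitary :
    (∀ u v : ℤ ⊕ ℤ,
      ∑ᶠ w : ℤ ⊕ ℤ, quantumWalk u w * conj (quantumWalk v w) = if u = v then 1 else 0) ∧
    (∀ u v : ℤ ⊕ ℤ,
      ∑ᶠ w : ℤ ⊕ ℤ, conj (quantumWalk w u) * quantumWalk w v = if u = v then 1 else 0) := by
  constructor
  · rintro (n | n) (m | m) <;>
    · rw [finsum_pair _ (n - 1) (n + 1) (by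
        rintro (w | w) hw <;> simp only [quantumWalk, ne_eq] at hw <;>
          split_ifs at hw with h <;> simp_all)]
      simp only [quantumWalk, apply_ite (starRingEnd ℂ), map_neg, Complex.conj_ofReal, map_zero]
      split_ifs <;> simp_all [csq, csq'] <;> first | omega | norm_num
  · rintro (n | n) (m | m) <;>
    [ rw [finsum_pair _ (n + 1) (n + 1) (by
        rintro (w | w) hw <;> simp only [quantumWalk, ne_eq, apply_ite (starRingEnd ℂ),
            map_zero] at hw <;> split_ifs at hw with h <;> simp_all)];
      rw [finsum_pair _ (n + 1) (n + 1) (by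
        rintro (w | w) hw <;> simp only [quantumWalk, ne_eq, apply_ite (starRingEnd ℂ),
            map_zero] at hw <;> split_ifs at hw with h <;> simp_all)];
      rw [finsum_pair _ (n - 1) (n - 1) (by
        rintro (w | w) hw <;> simp only [quantumWalk, ne_eq, apply_ite (starRingEnd ℂ),
            map_zero] at hw <;> split_ifs at hw with h <;> simp_all)];
      rw [finsum_pair _ (n - 1) (n - 1) (by
        rintro (w | w) hw <;> simp only [quantumWalk, ne_eq, apply_ite (starRingEnd ℂ),
            map_zero] at hw <;> split_ifs at hw with h <;> simp_all)]] <;>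
    · simp only [quantumWalk, apply_ite (starRingEnd ℂ), map_neg, Complex.conj_ofReal, map_zero]
      split_ifs <;> simp_all [csq, csq'] <;> first | omega | norm_num
end
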